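/- Let L_MSP be the labeling of order 3 whose rows (for q = 1,…,8) are 000, 001, 010, 111, 100, 101, 110, 011, and let N_3 be the NBC of order 3 (rows 000,001,010,011,100,101,110,111). Then there is no invertible 3×3 matrix T over GF(2) such that L_MSP(q) = N_3(q) T for all q = 1,…,8; i.e., L_MSP and N_3 belong to different modified Hadamard classes. In particular, the NBC does not span all labelings that follow the set-partitioning principle for 8-PSK. -/

import Mathlib

/-- The natural binary code (NBC) of order `m`. -/
def NBC (m : ℕ) : Fin (2 ^ m) → Fin m → ZMod 2 :=
  fun q l => if Nat.testBit (q : ℕ) (m - 1 - (l : ℕ)) then 1 else 0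

/-- The modified set-partitioning labeling: rows 000,001,010,111,100,101,110,011. -/
def L_MSP : Fin (2 ^ 3) → Fin 3 → ZMod 2 :=
  ![![0,0,0], ![0,0,1], ![0,1,0], ![1,1,1], ![1,0,0], ![1,0,1], ![1,1,0], ![0,1,1]]

/-- The 8-PSK constellation: `x_q = (cos(2πq/8), sin(2πq/8))` (0-indexed `q`). -/
noncomputable def x8PSK (q : Fin (2 ^ 3)) : EuclideanSpace ℝ (Fin 2) :=
  (WithLp.equiv 2 (Fin 2 → ℝ)).symm
    ![Real.cos (2 * Real.pi * (q : ℕ) / 8), Real.sin (2 * Real.pi * (q : ℕ) / 8)]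

/-- The minimum intra-Euclidean distance `δ_l` of 8-PSK with labeling `L`. -/
noncomputable def delta8PSK (L : Fin (2 ^ 3) → Fin 3 → ZMod 2) (l : ℕ) : ℝ :=
  sInf {d : ℝ | ∃ q q' : Fin (2 ^ 3), q ≠ q' ∧
    (∀ j : Fin 3, 3 - l ≤ (j : ℕ) → L q j = L q' j) ∧
    d = dist (x8PSK q) (x8PSK q')}

/-!
A labeling `q ↦ N₃(q) T` is additive wherever `N₃` is; since `N₃(3) = N₃(1) + N₃(2)` while
`L_MSP(3) = 111 ≠ 001 + 010 = L_MSP(1) + L_MSP(2)`, no such `T` produces `L_MSP`.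

`L_MSP` follows the set-partitioning principle because its last `l` bits are `q mod 2^l`.
The 8-PSK distance between `x_q` and `x_q'` depends only on `k = q - q' mod 8`, namely it is
`√(2 - 2 cos (π k / 4))`; so `δ₀ = √(2 - √2)` (from `k = 1`), `δ₁ = √2` (from even `k`) and
`δ₂ = 2` (from `k = 4`).
-/

open Real Matrix

theorem add_eq_add_of_forall_eq_vecMul {ι m n R : Type*} [Fintype m]
    [NonUnitalNonAssocSemiring R] {L : ι → n → R} {N : ι → m → R} {T : Matrix m n R}
    (hT : ∀ q, L q = vecMul (N q) T) {a b c : ι} (hc : N c = N a + N b) :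
    L c = L a + L b := by
  rw [hT, hT, hT, hc, add_vecMul]

theorem Fin.one_le_val_sub {n : ℕ} [NeZero n] {q q' : Fin n} (hq : q ≠ q') :
    1 ≤ ((q - q' : Fin n) : ℕ) :=
  Nat.one_le_iff_ne_zero.mpr (by simpa [Fin.ext_iff, sub_eq_zero] using hq)

theorem not_exists_isUnit_L_MSP_eq_vecMul_NBC :
    ¬ ∃ T : Matrix (Fin 3) (Fin 3) (ZMod 2), IsUnit T ∧
      ∀ q, L_MSP q = vecMul (NBC 3 q) T := by
  rintro ⟨T, -, hT⟩
  have h := add_eq_add_of_forall_eq_vecMul hT (a := 1) (b := 2) (c := 3) (by decide)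
  exact absurd h (by decide)

theorem dist_toLp_cos_sin (a b : ℝ) :
    dist (WithLp.toLp 2 ![cos a, sin a]) (WithLp.toLp 2 ![cos b, sin b]) =
      √(2 - 2 * cos (a - b)) := by
  rw [EuclideanSpace.dist_eq, Fin.sum_univ_two, Real.dist_eq, Real.dist_eq, sq_abs, sq_abs]
  congr 1
  simp only [cons_val_zero, cons_val_one, cos_sub]
  nlinarith [sin_sq_add_cos_sq a, sin_sq_add_cos_sq b]

theorem cos_le_cos_pi_div_four {x : ℝ} (h₁ : π / 4 ≤ x) (h₇ : x ≤ 2 * π - π / 4) :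
    cos x ≤ cos (π / 4) := by
  rcases le_total x π with h | h
  · exact cos_le_cos_of_nonneg_of_le_pi (by positivity) h h₁
  · rw [← cos_two_pi_sub x]
    exact cos_le_cos_of_nonneg_of_le_pi (by positivity) (by linarith) (by linarith)

theorem dist_x8PSK (q q' : Fin (2 ^ 3)) :
    dist (x8PSK q) (x8PSK q') = √(2 - 2 * cos (π * ((q - q' : Fin (2 ^ 3)) : ℕ) / 4)) := by
  rw [x8PSK, x8PSK, WithLp.equiv_symm_apply, dist_toLp_cos_sin]
  congr 2
  rcases le_or_gt q' q with h | h
  · rw [Fin.coe_sub_iff_le.mpr h, Nat.cast_sub h]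
    ring_nf
  · rw [Fin.coe_sub_iff_lt.mpr h, Nat.cast_sub (by omega), ← cos_add_two_pi]
    push_cast
    ring_nf

theorem delta8PSK_eq {L : Fin (2 ^ 3) → Fin 3 → ZMod 2} {l : ℕ} {c : ℝ} (q₀ q₀' : Fin (2 ^ 3))
    (h₀ : q₀ ≠ q₀') (hL₀ : ∀ j : Fin 3, 3 - l ≤ (j : ℕ) → L q₀ j = L q₀' j)
    (hc : dist (x8PSK q₀) (x8PSK q₀') = c)
    (hle : ∀ q q', q ≠ q' → (∀ j : Fin 3, 3 - l ≤ (j : ℕ) → L q j = L q' j) →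
      c ≤ dist (x8PSK q) (x8PSK q')) :
    delta8PSK L l = c :=
  IsLeast.csInf_eq ⟨⟨q₀, q₀', h₀, hL₀, hc.symm⟩, by rintro _ ⟨q, q', hq, hL, rfl⟩; exact hle q q' hq hL⟩

theorem two_dvd_sub_of_L_MSP_eq {q q' : Fin (2 ^ 3)} (h : L_MSP q 2 = L_MSP q' 2) :
    2 ∣ ((q - q' : Fin (2 ^ 3)) : ℕ) := by
  revert q q'
  decide

theorem sub_eq_four_of_L_MSP_eq {q q' : Fin (2 ^ 3)} (hq : q ≠ q')
    (h₁ : L_MSP q 1 = L_MSP q' 1) (h₂ : L_MSP q 2 = L_MSP q' 2) : q - q' = 4 := by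
  revert q q'
  decide

theorem sqrt_two_sub_sqrt_two_le_dist_x8PSK {q q' : Fin (2 ^ 3)} (hq : q ≠ q') :
    √(2 - √2) ≤ dist (x8PSK q) (x8PSK q') := by
  rw [dist_x8PSK]
  have hk₁ : (1 : ℝ) ≤ ((q - q' : Fin (2 ^ 3)) : ℕ) := by exact_mod_cast Fin.one_le_val_sub hq
  have hk₇ : (((q - q' : Fin (2 ^ 3)) : ℕ) : ℝ) ≤ 7 := by
    exact_mod_cast Nat.le_of_lt_succ (q - q').isLt
  have := cos_le_cos_pi_div_four (x := π * ((q - q' : Fin (2 ^ 3)) : ℕ) / 4)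
    (by nlinarith [pi_pos]) (by nlinarith [pi_pos])
  rw [cos_pi_div_four] at this
  exact sqrt_le_sqrt (by linarith)

theorem sqrt_two_le_dist_x8PSK {q q' : Fin (2 ^ 3)} (hq : q ≠ q')
    (h : 2 ∣ ((q - q' : Fin (2 ^ 3)) : ℕ)) : √2 ≤ dist (x8PSK q) (x8PSK q') := by
  rw [dist_x8PSK]
  obtain ⟨k, hk⟩ := h
  have hk₁ : (1 : ℝ) ≤ k := by exact_mod_cast (by have := Fin.one_le_val_sub hq; omega : 1 ≤ k)
  have hk₃ : (k : ℝ) ≤ 3 := by exact_mod_cast (by have := (q - q').isLt; omega : k ≤ 3)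
  have := cos_nonpos_of_pi_div_two_le_of_le (x := π * (2 * k : ℕ) / 4)
    (by push_cast; nlinarith [pi_pos]) (by push_cast; nlinarith [pi_pos])
  rw [hk]
  exact sqrt_le_sqrt (by linarith)

theorem delta8PSK_L_MSP_zero : delta8PSK L_MSP 0 = √(2 - √2) := by
  refine delta8PSK_eq 1 0 (by decide) (fun j hj => absurd hj (by omega)) ?_
    fun q q' hq _ => sqrt_two_sub_sqrt_two_le_dist_x8PSK hq
  rw [dist_x8PSK]
  norm_num [cos_pi_div_four]
  ring_nf

theorem delta8PSK_L_MSP_one : delta8PSK L_MSP 1 = √2 := by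
  refine delta8PSK_eq 2 0 (by decide) (by decide) ?_
    fun q q' hq hL => sqrt_two_le_dist_x8PSK hq (two_dvd_sub_of_L_MSP_eq (hL 2 (by decide)))
  rw [dist_x8PSK]
  norm_num [show π * 2 / 4 = π / 2 by ring]

theorem delta8PSK_L_MSP_two : delta8PSK L_MSP 2 = 2 := by
  refine delta8PSK_eq 4 0 (by decide) (by decide) ?_ fun q q' hq hL => ?_
  · rw [dist_x8PSK]
    norm_num
  · rw [dist_x8PSK, sub_eq_four_of_L_MSP_eq hq (hL 1 (by decide)) (hL 2 (by decide))]
    norm_num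

/-- There is no invertible `3×3` matrix `T` over GF(2) with
`L_MSP = N_3 T`, i.e., `L_MSP` and the NBC belong to different modified Hadamard
classes. In particular, there exists a (bijective) labeling following the
set-partitioning principle for 8-PSK that is not in the modified Hadamard class of
the NBC. -/
theorem stmt_13 :
    (¬ ∃ T : Matrix (Fin 3) (Fin 3) (ZMod 2), IsUnit T ∧
        ∀ q, L_MSP q = Matrix.vecMul (NBC 3 q) T) ∧
    ∃ L : Fin (2 ^ 3) → Fin 3 → ZMod 2, Function.Bijective L ∧
      (delta8PSK L 0 < delta8PSK L 1 ∧ delta8PSK L 1 < delta8PSK L 2) ∧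
      ¬ ∃ T : Matrix (Fin 3) (Fin 3) (ZMod 2), IsUnit T ∧
        ∀ q, L q = Matrix.vecMul (NBC 3 q) T := by
  have hMSP := not_exists_isUnit_L_MSP_eq_vecMul_NBC
  have hsqrt2 : √2 < 2 := sqrt_two_lt_three_halves.trans (by norm_num)
  refine ⟨hMSP, L_MSP, by decide, ⟨?_, ?_⟩, hMSP⟩
  · rw [delta8PSK_L_MSP_zero, delta8PSK_L_MSP_one]
    exact sqrt_lt_sqrt (by linarith) (sub_lt_self 2 (sqrt_pos.mpr two_pos))
  · rwa [delta8PSK_L_MSP_one, delta8PSK_L_MSP_two]
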